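/- arXiv:2311.09364 — 5 statements merged into one kernel-verified Lean document; each statement's English description precedes it below -/
import Mathlib

section
/- If e is a compliant edge of a graph G and G - e is outerplanar, then G is outerplanar. -/
open SimpleGraph

universe u

/-- A flat (suspended) path: a path of length at least 2 all of whose internal
vertices have degree 2 in `G`. -/
def IsFlatPath {V : Type u} (G : SimpleGraph V) {x y : V} (p : G.Walk x y) : Prop :=
  p.IsPath ∧ 2 ≤ p.length ∧
    ∀ v ∈ p.support, v ≠ x → v ≠ y → (G.neighborSet v).ncard = 2

/-- An edge `xy` is compliant if `x` and `y` are also joined by a flat path. -/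
def Compliant {V : Type u} (G : SimpleGraph V) (x y : V) : Prop :=
  G.Adj x y ∧ ∃ p : G.Walk x y, IsFlatPath G p

/-- A graph is 2-connected if it has at least 3 vertices and remains connected
after deleting any single vertex. -/
def TwoConnected {V : Type u} (G : SimpleGraph V) : Prop :=
  3 ≤ Nat.card V ∧ ∀ v : V, ((⊤ : G.Subgraph).deleteVerts {v}).coe.Connected

/-- A (finite) graph is a cycle iff it is connected and 2-regular. -/
def IsCycleGraph {V : Type u} (G : SimpleGraph V) : Prop :=
  G.Connected ∧ ∀ v : V, (G.neighborSet v).ncard = 2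

/-- Data exhibiting a subgraph of `G` which is a subdivision of `H`:
branch vertices are given by an injection `f`, and each edge of `H` is
replaced by a path in `G`, these paths being internally disjoint and their
internal vertices avoiding the branch vertices. -/
structure SubdivisionIn {V : Type u} {W : Type*} (G : SimpleGraph V) (H : SimpleGraph W) where
  f : W → V
  inj : Function.Injective f
  path : ∀ ⦃u v : W⦄, H.Adj u v → G.Walk (f u) (f v)
  isPath : ∀ ⦃u v : W⦄ (h : H.Adj u v), (path h).IsPath
  internal_not_branch : ∀ ⦃u v : W⦄ (h : H.Adj u v), ∀ w ∈ (path h).support,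
      (∃ z, w = f z) → w = f u ∨ w = f v
  internal_disjoint : ∀ ⦃u v u' v' : W⦄ (h : H.Adj u v) (h' : H.Adj u' v'),
      s(u, v) ≠ s(u', v') → ∀ w ∈ (path h).support, w ∈ (path h').support →
        w = f u ∨ w = f v

/-- The vertices of the subdivided subgraph. -/
def SubdivisionIn.verts {V : Type u} {W : Type*} {G : SimpleGraph V} {H : SimpleGraph W}
    (D : SubdivisionIn G H) : Set V :=
  {w | ∃ (u v : W) (h : H.Adj u v), w ∈ (D.path h).support}

/-- `G` contains a subdivision of `H` as a subgraph. -/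
def ContainsSubdivision {V : Type u} {W : Type*} (G : SimpleGraph V) (H : SimpleGraph W) : Prop :=
  Nonempty (SubdivisionIn G H)

/-- A graph is outerplanar iff it contains no subdivision of `K₄` or `K_{2,3}`
as a subgraph. -/
def Outerplanar {V : Type u} (G : SimpleGraph V) : Prop :=
  ¬ ContainsSubdivision G (⊤ : SimpleGraph (Fin 4)) ∧
  ¬ ContainsSubdivision G (completeBipartiteGraph (Fin 2) (Fin 3))

/-!
Let `p` be the flat path from `x` to `y` and `D` a subdivision of `H` in `G`. If no path of `D`
uses the edge `xy`, then `D` already lives in `G - xy`. Otherwise `D` avoids the inner vertices of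
`p`, all of degree two. A branch vertex there would have at most two neighbours in `H`, and its two
paths would run along `p` to `x` and `y`; as the path of `D` through `xy` contains both, the two
neighbours would be adjacent, which does not happen in `K₄` or `K₂,₃`. With no branch vertex
inside `p`, a path of `D` through an inner vertex of `p` runs along all of `p`, so it contains `x`
and `y`, is the path through `xy`, and contains the cycle `p + xy`. Hence the path through `xy`
can be rerouted along `p`.
-/

namespace SimpleGraph.Walk

variable {V : Type u} {G : SimpleGraph V} {s t : V}

theorem exists_getVert_eq_of_mem_support {x y w : V} {p : G.Walk x y} (hw : w ∈ p.support)
    (hx : w ≠ x) (hy : w ≠ y) : ∃ i, 0 < i ∧ i < p.length ∧ p.getVert i = w := by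
  obtain ⟨i, rfl, hi⟩ := mem_support_iff_exists_getVert.mp hw
  refine ⟨i, Nat.pos_of_ne_zero fun h => hx (by simp [h]), lt_of_le_of_ne hi fun h => hy ?_, rfl⟩
  simp [h]

theorem IsPath.ncard_neighborSet_toSubgraph_eq_two {q : G.Walk s t} (hq : q.IsPath) {v : V}
    (hv : v ∈ q.support) (hs : v ≠ s) (ht : v ≠ t) :
    (q.toSubgraph.neighborSet v).ncard = 2 := by
  obtain ⟨i, h0, hi, rfl⟩ := exists_getVert_eq_of_mem_support hv hs ht
  exact hq.ncard_neighborSet_toSubgraph_internal_eq_two h0.ne' hi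

theorem IsPath.neighborSet_toSubgraph_eq_of_ncard_eq_two {q : G.Walk s t} (hq : q.IsPath)
    {v : V} (hv : v ∈ q.support) (hs : v ≠ s) (ht : v ≠ t)
    (hdeg : (G.neighborSet v).ncard = 2) : q.toSubgraph.neighborSet v = G.neighborSet v :=
  Set.eq_of_subset_of_ncard_le (q.toSubgraph.neighborSet_subset v)
    (by rw [hdeg, hq.ncard_neighborSet_toSubgraph_eq_two hv hs ht])
    (Set.finite_of_ncard_ne_zero (by omega))

theorem IsPath.mem_edges_of_ncard_eq_two {q : G.Walk s t} (hq : q.IsPath)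
    {v w : V} (hv : v ∈ q.support) (hs : v ≠ s) (ht : v ≠ t)
    (hdeg : (G.neighborSet v).ncard = 2) (hvw : G.Adj v w) : s(v, w) ∈ q.edges := by
  rw [← adj_toSubgraph_iff_mem_edges, ← Subgraph.mem_neighborSet,
    hq.neighborSet_toSubgraph_eq_of_ncard_eq_two hv hs ht hdeg]
  exact hvw

theorem getVert_mem_support_of_le {q : G.Walk s t} (hq : q.IsPath) {a b : V} (p : G.Walk a b)
    {i : ℕ} (hi : i ≤ p.length)
    (hint : ∀ j, 0 < j → j ≤ i →
      (G.neighborSet (p.getVert j)).ncard = 2 ∧ p.getVert j ≠ s ∧ p.getVert j ≠ t)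
    (hmem : p.getVert i ∈ q.support) : ∀ j ≤ i, p.getVert j ∈ q.support := by
  induction i with
  | zero => intro j hj; rwa [Nat.le_zero.mp hj]
  | succ i ih =>
    obtain ⟨hdeg, hs, ht⟩ := hint (i + 1) i.succ_pos le_rfl
    have hprev : p.getVert i ∈ q.support := q.snd_mem_support_of_mem_edges
      (hq.mem_edges_of_ncard_eq_two hmem hs ht hdeg (p.adj_getVert_succ (by omega)).symm)
    intro j hj
    rcases Nat.lt_or_eq_of_le hj with hj | rfl
    · exact ih (by omega) (fun k hk hki => hint k hk (by omega)) hprev j (by omega)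
    · exact hmem

theorem getVert_mem_support_of_ge {q : G.Walk s t} (hq : q.IsPath) {a b : V} (p : G.Walk a b)
    {i : ℕ} (hi : i ≤ p.length)
    (hint : ∀ j, i ≤ j → j < p.length →
      (G.neighborSet (p.getVert j)).ncard = 2 ∧ p.getVert j ≠ s ∧ p.getVert j ≠ t)
    (hmem : p.getVert i ∈ q.support) :
    ∀ j, i ≤ j → j ≤ p.length → p.getVert j ∈ q.support := by
  intro j hij hj
  have key := getVert_mem_support_of_le hq p.reverse (i := p.length - i) (by simp)
    (fun k hk hki => by rw [getVert_reverse]; exact hint _ (by omega) (by omega))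
    (by rwa [getVert_reverse, Nat.sub_sub_self hi]) (p.length - j) (by omega)
  rwa [getVert_reverse, Nat.sub_sub_self hj] at key

theorem IsCycle.not_edges_subset_of_isPath {v : V} {c : G.Walk v v} (hc : c.IsCycle)
    {q : G.Walk s t} (hq : q.IsPath) : ¬ c.edges ⊆ q.edges := by
  classical
  intro hsub
  have hle : ∀ w, c.toSubgraph.neighborSet w ⊆ q.toSubgraph.neighborSet w := fun w w' hw' =>
    adj_toSubgraph_iff_mem_edges.mpr (hsub (adj_toSubgraph_iff_mem_edges.mp hw'))
  have hv : v ∈ q.support :=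
    q.fst_mem_support_of_mem_edges (hsub (c.mk_start_snd_mem_edges hc.not_nil))
  have hq_nil : ¬ q.Nil := fun hnil => by
    simpa [edges_eq_nil.mpr hnil] using hsub (c.mk_start_snd_mem_edges hc.not_nil)
  -- Vertices of the cycle have two neighbours on it, hence are inner vertices of `q` whose
  -- neighbours in `q` are their neighbours on the cycle.
  have hnbr : ∀ w ∈ c.support,
      q.toSubgraph.neighborSet w = c.toSubgraph.neighborSet w ∧ w ≠ s := by
    intro w hw
    have hcw := hc.ncard_neighborSet_toSubgraph_eq_two hw
    have hnot_end : ∀ a, ¬ q.toSubgraph.neighborSet w ⊆ {a} := fun a h => by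
      simpa [hcw] using Set.ncard_le_ncard ((hle w).trans h)
    have hws : w ≠ s := by
      rintro rfl
      exact hnot_end _ (hq.neighborSet_toSubgraph_startpoint hq_nil).subset
    have hwt : w ≠ t := by
      rintro rfl
      exact hnot_end _ (hq.neighborSet_toSubgraph_endpoint hq_nil).subset
    obtain ⟨w', hw'⟩ := Set.nonempty_of_ncard_ne_zero (s := c.toSubgraph.neighborSet w) (by omega)
    have hwq : w ∈ q.support := q.mem_verts_toSubgraph.mp (hle w hw').fst_mem
    refine ⟨(Set.eq_of_subset_of_ncard_le (hle w) ?_ (finite_neighborSet_toSubgraph q)).symm, hws⟩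
    rw [hcw, hq.ncard_neighborSet_toSubgraph_eq_two hwq hws hwt]
  -- So the vertex set of the cycle is closed in `q`, yet `q` runs from it to `s` outside it.
  obtain ⟨d, hd, hd₁, hd₂⟩ := ((q.takeUntil v hv).reverse).exists_boundary_dart
    {w | w ∈ c.support} c.start_mem_support (fun hs => (hnbr s hs).2 rfl)
  have hdq : q.toSubgraph.Adj d.fst d.snd := by
    rw [adj_toSubgraph_iff_mem_edges]
    refine q.edges_takeUntil_subset_edges hv ?_
    rw [← List.mem_reverse, ← edges_reverse]
    exact List.mem_map_of_mem hd
  rw [← Subgraph.mem_neighborSet, (hnbr _ hd₁).1] at hdq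
  exact hd₂ (c.mem_verts_toSubgraph.mp (c.toSubgraph.neighborSet_subset_verts _ hdq))

section ReplaceEdge

variable [DecidableEq V] {x y : V}

def replaceEdge (p : G.Walk x y) : ∀ {a b : V}, G.Walk a b → G.Walk a b
  | _, _, nil => nil
  | a, _, cons (v := c) h q =>
      if h₁ : a = x ∧ c = y then (p.copy h₁.1.symm h₁.2.symm).append (replaceEdge p q)
      else if h₂ : a = y ∧ c = x then
        (p.reverse.copy h₂.1.symm h₂.2.symm).append (replaceEdge p q)
      else cons h (replaceEdge p q)

variable {p : G.Walk x y}

theorem replaceEdge_of_notMem_edges {a b : V} {q : G.Walk a b} (h : s(x, y) ∉ q.edges) :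
    replaceEdge p q = q := by
  induction q with
  | nil => rfl
  | cons hadj q ih =>
    rw [edges_cons, List.mem_cons, not_or] at h
    rw [replaceEdge, dif_neg, dif_neg, ih h.2]
    · rintro ⟨rfl, rfl⟩; exact h.1 Sym2.eq_swap
    · rintro ⟨rfl, rfl⟩; exact h.1 rfl

theorem mem_edges_replaceEdge (hp : s(x, y) ∉ p.edges) {a b : V} {q : G.Walk a b}
    {e : Sym2 V} (he : e ∈ (replaceEdge p q).edges) :
    (e ∈ p.edges ∨ e ∈ q.edges) ∧ e ≠ s(x, y) := by
  induction q with
  | nil => simp [replaceEdge] at he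
  | @cons a c b hadj q ih =>
    have hq : e ∈ (replaceEdge p q).edges →
        (e ∈ p.edges ∨ e ∈ (cons hadj q).edges) ∧ e ≠ s(x, y) :=
      fun he => (ih he).imp_left (Or.imp_right (List.mem_cons_of_mem _))
    rw [replaceEdge] at he
    split_ifs at he with h₁ h₂
    · obtain ⟨rfl, rfl⟩ := h₁
      rw [edges_append, List.mem_append, edges_copy] at he
      exact he.elim (fun he => ⟨Or.inl he, fun h => hp (h ▸ he)⟩) hq
    · obtain ⟨rfl, rfl⟩ := h₂
      rw [edges_append, List.mem_append, edges_copy, edges_reverse, List.mem_reverse] at he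
      exact he.elim (fun he => ⟨Or.inl he, fun h => hp (h ▸ he)⟩) hq
    · rw [edges_cons, List.mem_cons] at he
      rcases he with rfl | he
      · refine ⟨Or.inr (by simp), fun h => ?_⟩
        rcases Sym2.eq_iff.mp h with ⟨rfl, rfl⟩ | ⟨rfl, rfl⟩
        exacts [h₁ ⟨rfl, rfl⟩, h₂ ⟨rfl, rfl⟩]
      · exact hq he

theorem mem_support_replaceEdge {a b : V} {q : G.Walk a b} {w : V}
    (hw : w ∈ (replaceEdge p q).support) :
    w ∈ q.support ∨ (w ∈ p.support ∧ s(x, y) ∈ q.edges) := by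
  induction q with
  | nil => simpa [replaceEdge] using hw
  | @cons a c b hadj q ih =>
    have hq : w ∈ (replaceEdge p q).support →
        w ∈ (cons hadj q).support ∨ (w ∈ p.support ∧ s(x, y) ∈ (cons hadj q).edges) :=
      fun hw => (ih hw).imp (by simp +contextual) (by simp +contextual)
    rw [replaceEdge] at hw
    split_ifs at hw with h₁ h₂
    · obtain ⟨rfl, rfl⟩ := h₁
      rw [mem_support_append_iff, support_copy] at hw
      exact hw.elim (fun hw => Or.inr ⟨hw, by simp⟩) hq
    · obtain ⟨rfl, rfl⟩ := h₂
      rw [mem_support_append_iff, support_copy, support_reverse, List.mem_reverse] at hw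
      exact hw.elim (fun hw => Or.inr ⟨hw, by simp [Sym2.eq_swap]⟩) hq
    · rw [support_cons, List.mem_cons] at hw
      exact hw.elim (fun hw => Or.inl (by simp [hw])) hq

theorem IsPath.replaceEdge (hp : p.IsPath) {a b : V} {q : G.Walk a b} (hq : q.IsPath)
    (hdisj : ∀ w ∈ q.support, w ∈ p.support → w = x ∨ w = y) :
    (replaceEdge p q).IsPath := by
  induction q with
  | nil => exact IsPath.nil
  | @cons a c b hadj q ih =>
    rw [cons_isPath_iff] at hq
    have hd' : ∀ w ∈ q.support, w ∈ p.support → w = x ∨ w = y := fun w hw =>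
      hdisj w (List.mem_cons_of_mem _ hw)
    have hcq : c ∉ q.support.tail :=
      (List.nodup_cons.mp (q.cons_tail_support ▸ hq.1.support_nodup)).1
    have htail : q.support.tail.Nodup := hq.1.support_nodup.sublist (List.tail_sublist _)
    rw [Walk.replaceEdge]
    split_ifs with h₁ h₂
    · obtain ⟨rfl, rfl⟩ := h₁
      rw [replaceEdge_of_notMem_edges fun h => hq.2 (q.fst_mem_support_of_mem_edges h),
        isPath_def, support_append, List.nodup_append]
      refine ⟨by simpa using hp.support_nodup, htail, ?_⟩
      rintro w hwp _ hwt rfl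
      rw [support_copy] at hwp
      rcases hd' w (List.mem_of_mem_tail hwt) hwp with rfl | rfl
      exacts [hq.2 (List.mem_of_mem_tail hwt), hcq hwt]
    · obtain ⟨rfl, rfl⟩ := h₂
      rw [replaceEdge_of_notMem_edges fun h => hq.2 (q.snd_mem_support_of_mem_edges h),
        isPath_def, support_append, List.nodup_append]
      refine ⟨by simpa using hp.reverse.support_nodup, htail, ?_⟩
      rintro w hwp _ hwt rfl
      rw [support_copy, support_reverse, List.mem_reverse] at hwp
      rcases hd' w (List.mem_of_mem_tail hwt) hwp with rfl | rfl
      exacts [hcq hwt, hq.2 (List.mem_of_mem_tail hwt)]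
    · refine cons_isPath_iff _ _ |>.mpr ⟨ih hq.1 hd', fun ha => ?_⟩
      rcases mem_support_replaceEdge ha with ha | ⟨hap, hxy⟩
      · exact hq.2 ha
      · rcases hdisj a (start_mem_support _) hap with rfl | rfl
        exacts [hq.2 (q.fst_mem_support_of_mem_edges hxy),
          hq.2 (q.snd_mem_support_of_mem_edges hxy)]

end ReplaceEdge

end SimpleGraph.Walk

namespace IsFlatPath

open Walk

variable {V : Type u} {G : SimpleGraph V} {x y : V} {p : G.Walk x y}

theorem reverse (hp : IsFlatPath G p) : IsFlatPath G p.reverse :=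
  ⟨hp.1.reverse, by simpa using hp.2.1,
    fun v hv hvy hvx => hp.2.2 v (by simpa using hv) hvx hvy⟩

theorem getVert_ne_start (hp : IsFlatPath G p) {i : ℕ} (h0 : 0 < i) (hi : i ≤ p.length) :
    p.getVert i ≠ x :=
  fun h => h0.ne' ((hp.1.getVert_eq_start_iff hi).mp h)

theorem getVert_ne_end (hp : IsFlatPath G p) {i : ℕ} (hi : i < p.length) : p.getVert i ≠ y :=
  fun h => hi.ne ((hp.1.getVert_eq_end_iff hi.le).mp h)

theorem ncard_neighborSet_getVert (hp : IsFlatPath G p) {i : ℕ} (h0 : 0 < i)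
    (hi : i < p.length) : (G.neighborSet (p.getVert i)).ncard = 2 :=
  hp.2.2 _ (p.getVert_mem_support i) (hp.getVert_ne_start h0 hi.le) (hp.getVert_ne_end hi)

theorem neighborSet_getVert (hp : IsFlatPath G p) {i : ℕ} (h0 : 0 < i) (hi : i < p.length) :
    G.neighborSet (p.getVert i) = {p.getVert (i - 1), p.getVert (i + 1)} := by
  rw [← hp.1.neighborSet_toSubgraph_eq_of_ncard_eq_two (p.getVert_mem_support i)
    (hp.getVert_ne_start h0 hi.le) (hp.getVert_ne_end hi) (hp.ncard_neighborSet_getVert h0 hi),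
    hp.1.neighborSet_toSubgraph_internal h0.ne' hi]

theorem mk_notMem_edges (hp : IsFlatPath G p) : s(x, y) ∉ p.edges := fun h =>
  hp.getVert_ne_end (i := 1) (by have := hp.2.1; omega)
    (hp.1.snd_of_toSubgraph_adj (adj_toSubgraph_iff_mem_edges.mpr h))

theorem isCycle_cons (hp : IsFlatPath G p) (hxy : G.Adj x y) : (cons hxy.symm p).IsCycle :=
  (cons_isCycle_iff p hxy.symm).mpr ⟨hp.1, by rw [Sym2.eq_swap]; exact hp.mk_notMem_edges⟩

variable {s t : V} {q : G.Walk s t}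

theorem support_subset_of_getVert_mem (hp : IsFlatPath G p) (hq : q.IsPath)
    (hends : ∀ j, 0 < j → j < p.length → p.getVert j ≠ s ∧ p.getVert j ≠ t)
    {i : ℕ} (h0 : 0 < i) (hi : i < p.length) (hmem : p.getVert i ∈ q.support) :
    p.support ⊆ q.support := by
  intro w hw
  obtain ⟨j, rfl, hj⟩ := mem_support_iff_exists_getVert.mp hw
  rcases le_total j i with hji | hij
  · exact getVert_mem_support_of_le hq p hi.le
      (fun k hk hki => ⟨hp.ncard_neighborSet_getVert hk (by omega), hends k hk (by omega)⟩)
      hmem j hji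
  · exact getVert_mem_support_of_ge hq p hi.le
      (fun k hik hk => ⟨hp.ncard_neighborSet_getVert (by omega) hk, hends k (by omega) hk⟩)
      hmem j hij hj

theorem edges_subset_of_support_subset (hp : IsFlatPath G p) (hq : q.IsPath)
    (hends : ∀ j, 0 < j → j < p.length → p.getVert j ≠ s ∧ p.getVert j ≠ t)
    (hsupp : p.support ⊆ q.support) : p.edges ⊆ q.edges := by
  have hedge : ∀ j, 0 < j → j < p.length → ∀ w, G.Adj (p.getVert j) w →
      s(p.getVert j, w) ∈ q.edges := fun j h0 hj w hw =>
    hq.mem_edges_of_ncard_eq_two (hsupp (p.getVert_mem_support j)) (hends j h0 hj).1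
      (hends j h0 hj).2 (hp.ncard_neighborSet_getVert h0 hj) hw
  intro e he
  obtain ⟨i, hi, rfl⟩ := List.mem_iff_getElem.mp he
  rw [getElem_edges]
  rw [length_edges] at hi
  rcases Nat.eq_zero_or_pos i with rfl | h0
  · rw [Sym2.eq_swap]
    exact hedge 1 one_pos (by have := hp.2.1; omega) _ (p.adj_getVert_succ (by omega)).symm
  · exact hedge i h0 hi _ (p.adj_getVert_succ hi)

theorem start_mem_support_of_snd_eq (hp : IsFlatPath G p) {m : ℕ} (h0 : 0 < m)
    (hm : m < p.length) (hq : q.IsPath) (hs : p.getVert m = s)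
    (ht : ∀ j, 0 < j → j < p.length → p.getVert j ≠ t) (hsnd : q.snd = p.getVert (m - 1)) :
    x ∈ q.support := by
  have hint : ∀ j, 0 < j → j ≤ m - 1 →
      (G.neighborSet (p.getVert j)).ncard = 2 ∧ p.getVert j ≠ s ∧ p.getVert j ≠ t := by
    intro j hj hjm
    refine ⟨hp.ncard_neighborSet_getVert hj (by omega), fun h => ?_, ht j hj (by omega)⟩
    have := hp.1.getVert_injOn (by simp; omega) (by simp; omega) (h.trans hs.symm)
    omega
  simpa using getVert_mem_support_of_le hq p (by omega) hint
    (hsnd ▸ q.getVert_mem_support 1) 0 (Nat.zero_le _)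

theorem end_mem_support_of_snd_eq (hp : IsFlatPath G p) {m : ℕ} (h0 : 0 < m)
    (hm : m < p.length) (hq : q.IsPath) (hs : p.getVert m = s)
    (ht : ∀ j, 0 < j → j < p.length → p.getVert j ≠ t) (hsnd : q.snd = p.getVert (m + 1)) :
    y ∈ q.support := by
  have hlen := p.length_reverse
  refine hp.reverse.start_mem_support_of_snd_eq (m := p.length - m) (by omega) (by omega) hq
    ?_ ?_ ?_
  · rwa [getVert_reverse, Nat.sub_sub_self hm.le]
  · intro j hj hjl
    rw [getVert_reverse]
    exact ht _ (by omega) (by omega)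
  · rw [getVert_reverse, hsnd]
    congr 1
    omega

end IsFlatPath

def HasThreeNeighbors {W : Type*} (H : SimpleGraph W) (z : W) : Prop :=
  ∃ c₁ c₂ c₃, c₁ ≠ c₂ ∧ c₁ ≠ c₃ ∧ c₂ ≠ c₃ ∧ H.Adj z c₁ ∧ H.Adj z c₂ ∧ H.Adj z c₃

def HasThreeNeighborsOrBetween {W : Type*} (H : SimpleGraph W) : Prop :=
  ∀ z, HasThreeNeighbors H z ∨ ∃ b₁ b₂, b₁ ≠ b₂ ∧ ¬ H.Adj b₁ b₂ ∧ H.Adj z b₁ ∧ H.Adj z b₂ ∧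
    HasThreeNeighbors H b₁ ∧ HasThreeNeighbors H b₂

namespace SubdivisionIn

open Walk

variable {V : Type u} {W : Type*} {G : SimpleGraph V} {H : SimpleGraph W}
  (D : SubdivisionIn G H)

theorem exists_f_eq_of_mem_support {u v u' v' : W} {h : H.Adj u v} {h' : H.Adj u' v'}
    (hne : s(u, v) ≠ s(u', v')) {w : V} (hw : w ∈ (D.path h).support)
    (hw' : w ∈ (D.path h').support) : ∃ a, D.f a = w ∧ a ∈ s(u, v) ∧ a ∈ s(u', v') := by
  have endpoint : ∀ {u v : W}, w = D.f u ∨ w = D.f v → ∃ a ∈ s(u, v), D.f a = w := by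
    rintro u v (rfl | rfl)
    exacts [⟨u, Sym2.mem_mk_left _ _, rfl⟩, ⟨v, Sym2.mem_mk_right _ _, rfl⟩]
  obtain ⟨a, ha, rfl⟩ := endpoint (D.internal_disjoint h h' hne w hw hw')
  obtain ⟨a', ha', haa'⟩ := endpoint (D.internal_disjoint h' h hne.symm _ hw' hw)
  exact ⟨a, rfl, ha, D.inj haa' ▸ ha'⟩

theorem sym2_eq_of_mem_support {u v u' v' : W} {h : H.Adj u v} {h' : H.Adj u' v'} {x y : V}
    (hxy : x ≠ y) (hx : x ∈ (D.path h).support) (hy : y ∈ (D.path h).support)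
    (hx' : x ∈ (D.path h').support) (hy' : y ∈ (D.path h').support) :
    s(u, v) = s(u', v') := by
  by_contra hne
  obtain ⟨a, rfl, ha, ha'⟩ := D.exists_f_eq_of_mem_support hne hx hx'
  obtain ⟨b, rfl, hb, hb'⟩ := D.exists_f_eq_of_mem_support hne hy hy'
  have hab : a ≠ b := fun h => hxy (h ▸ rfl)
  exact hne (((Sym2.mem_and_mem_iff hab).mp ⟨ha, hb⟩).trans
    ((Sym2.mem_and_mem_iff hab).mp ⟨ha', hb'⟩).symm)

theorem snd_ne_snd {z c c' : W} (h : H.Adj z c) (h' : H.Adj z c') (hcc' : c ≠ c') :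
    (D.path h).snd ≠ (D.path h').snd := by
  intro heq
  have hne : s(z, c) ≠ s(z, c') := fun he => hcc' (Sym2.congr_right.mp he)
  have hmem : (D.path h).snd ∈ (D.path h').support := heq ▸ (D.path h').getVert_mem_support 1
  obtain ⟨a, ha, haz, haz'⟩ :=
    D.exists_f_eq_of_mem_support hne ((D.path h).getVert_mem_support 1) hmem
  have hadj := (D.path h).adj_snd (not_nil_of_ne (D.inj.ne h.ne))
  rcases Sym2.mem_iff.mp haz with rfl | rfl
  · exact hadj.ne ha
  · rcases Sym2.mem_iff.mp haz' with rfl | rfl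
    exacts [h.ne rfl, hcc' rfl]

theorem not_hasThreeNeighbors {z : W} (hdeg : (G.neighborSet (D.f z)).ncard = 2) :
    ¬ HasThreeNeighbors H z := by
  rintro ⟨c₁, c₂, c₃, h₁₂, h₁₃, h₂₃, h₁, h₂, h₃⟩
  have hnbr : ∀ ⦃c⦄ (h : H.Adj z c), (D.path h).snd ∈ G.neighborSet (D.f z) := fun c h =>
    (D.path h).adj_snd (not_nil_of_ne (D.inj.ne h.ne))
  have hsub : {(D.path h₁).snd, (D.path h₂).snd, (D.path h₃).snd} ⊆ G.neighborSet (D.f z) := by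
    rintro w (rfl | rfl | rfl)
    exacts [hnbr h₁, hnbr h₂, hnbr h₃]
  have := Set.ncard_le_ncard hsub (Set.finite_of_ncard_ne_zero (by omega))
  rw [Set.ncard_eq_three.mpr ⟨_, _, _, D.snd_ne_snd h₁ h₂ h₁₂, D.snd_ne_snd h₁ h₃ h₁₃,
    D.snd_ne_snd h₂ h₃ h₂₃, rfl⟩, hdeg] at this
  omega

/-- `SubdivisionIn` lets the two orientations of an edge of `H` carry unrelated paths. -/
def IsSymmetric : Prop := ∀ ⦃u v : W⦄ (h : H.Adj u v), D.path h.symm = (D.path h).reverse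

theorem mem_support_iff_of_sym2_eq (hD : D.IsSymmetric) {u v u' v' : W} (h : H.Adj u v)
    (h' : H.Adj u' v') (he : s(u, v) = s(u', v')) {w : V} :
    w ∈ (D.path h).support ↔ w ∈ (D.path h').support := by
  rcases Sym2.eq_iff.mp he with ⟨rfl, rfl⟩ | ⟨rfl, rfl⟩
  · rfl
  · rw [show h' = h.symm from rfl, hD, support_reverse, List.mem_reverse]

theorem mem_edges_iff_of_sym2_eq (hD : D.IsSymmetric) {u v u' v' : W} (h : H.Adj u v)
    (h' : H.Adj u' v') (he : s(u, v) = s(u', v')) {e : Sym2 V} :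
    e ∈ (D.path h).edges ↔ e ∈ (D.path h').edges := by
  rcases Sym2.eq_iff.mp he with ⟨rfl, rfl⟩ | ⟨rfl, rfl⟩
  · rfl
  · rw [show h' = h.symm from rfl, hD, edges_reverse, List.mem_reverse]

theorem adj_of_mem_support (hD : D.IsSymmetric) {u₀ v₀ z b₁ b₂ : W} (h₀ : H.Adj u₀ v₀)
    (h₁ : H.Adj z b₁) (h₂ : H.Adj z b₂) (hb : b₁ ≠ b₂) {x y : V}
    (hx₀ : x ∈ (D.path h₀).support) (hy₀ : y ∈ (D.path h₀).support)
    (hx : x ∈ (D.path h₁).support) (hy : y ∈ (D.path h₂).support)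
    (hxz : x ≠ D.f z) (hyz : y ≠ D.f z) : H.Adj b₁ b₂ := by
  have hne : s(z, b₁) ≠ s(z, b₂) := fun he => hb (Sym2.congr_right.mp he)
  have hmeet : ∀ w ∈ (D.path h₁).support, w ∈ (D.path h₂).support → w = D.f z := by
    intro w hw₁ hw₂
    obtain ⟨a, rfl, ha₁, ha₂⟩ := D.exists_f_eq_of_mem_support hne hw₁ hw₂
    rcases Sym2.mem_iff.mp ha₁ with rfl | rfl
    · rfl
    · rcases Sym2.mem_iff.mp ha₂ with rfl | rfl
      exacts [rfl, (hb rfl).elim]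
  have hend : ∀ {b : W} (h : H.Adj z b) {w : V}, w ∈ (D.path h).support →
      w ∈ (D.path h₀).support → w ≠ D.f z → s(u₀, v₀) ≠ s(z, b) → b ∈ s(u₀, v₀) := by
    intro b h w hw hw₀ hwz he
    obtain ⟨a, rfl, ha₀, ha⟩ := D.exists_f_eq_of_mem_support he hw₀ hw
    rcases Sym2.mem_iff.mp ha with rfl | rfl
    exacts [(hwz rfl).elim, ha₀]
  by_cases he₁ : s(u₀, v₀) = s(z, b₁)
  · exact absurd (hmeet y ((D.mem_support_iff_of_sym2_eq hD h₀ h₁ he₁).mp hy₀) hy) hyz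
  by_cases he₂ : s(u₀, v₀) = s(z, b₂)
  · exact absurd (hmeet x hx ((D.mem_support_iff_of_sym2_eq hD h₀ h₂ he₂).mp hx₀)) hxz
  have he := (Sym2.mem_and_mem_iff hb).mp ⟨hend h₁ hx hx₀ hxz he₁, hend h₂ hy hy₀ hyz he₂⟩
  rwa [← H.mem_edgeSet, ← he]

def symmetrize [LinearOrder W] : SubdivisionIn G H where
  f := D.f
  inj := D.inj
  path u v h := if u < v then D.path h else (D.path h.symm).reverse
  isPath u v h := by
    split_ifs
    exacts [D.isPath h, (D.isPath h.symm).reverse]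
  internal_not_branch u v h w hw hz := by
    split_ifs at hw
    · exact D.internal_not_branch h w hw hz
    · rw [support_reverse, List.mem_reverse] at hw
      exact (D.internal_not_branch h.symm w hw hz).symm
  internal_disjoint u v u' v' h h' hne w hw hw' := by
    have hne₁ : s(v, u) ≠ s(u', v') := by rwa [Sym2.eq_swap]
    have hne₂ : s(u, v) ≠ s(v', u') := by rwa [Sym2.eq_swap (a := v')]
    have hne₃ : s(v, u) ≠ s(v', u') := by rwa [Sym2.eq_swap, Sym2.eq_swap (a := v')]
    split_ifs at hw hw'
    · exact D.internal_disjoint h h' hne w hw hw'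
    · rw [support_reverse, List.mem_reverse] at hw'
      exact D.internal_disjoint h h'.symm hne₂ w hw hw'
    · rw [support_reverse, List.mem_reverse] at hw
      exact (D.internal_disjoint h.symm h' hne₁ w hw hw').symm
    · rw [support_reverse, List.mem_reverse] at hw hw'
      exact (D.internal_disjoint h.symm h'.symm hne₃ w hw hw').symm

theorem isSymmetric_symmetrize [LinearOrder W] : D.symmetrize.IsSymmetric := by
  intro u v h
  simp only [symmetrize]
  rcases lt_trichotomy u v with huv | rfl | hvu
  · rw [if_neg huv.not_gt, if_pos huv]
  · exact absurd rfl h.ne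
  · rw [if_pos hvu, if_neg hvu.not_gt, reverse_reverse]

def transfer (G' : SimpleGraph V)
    (hG' : ∀ ⦃u v : W⦄ (h : H.Adj u v), ∀ e ∈ (D.path h).edges, e ∈ G'.edgeSet) :
    SubdivisionIn G' H where
  f := D.f
  inj := D.inj
  path u v h := (D.path h).transfer G' (hG' h)
  isPath u v h := (D.isPath h).transfer _
  internal_not_branch u v h := by simpa only [support_transfer] using D.internal_not_branch h
  internal_disjoint u v u' v' h h' := by
    simpa only [support_transfer] using D.internal_disjoint h h'

theorem containsSubdivision_deleteEdges {x y : V}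
    (hD : ∀ ⦃u v : W⦄ (h : H.Adj u v), s(x, y) ∉ (D.path h).edges) :
    ContainsSubdivision (G.deleteEdges {s(x, y)}) H :=
  ⟨D.transfer _ fun u v h e he => by
    rw [edgeSet_deleteEdges]
    exact ⟨(D.path h).edges_subset_edgeSet he,
      fun hexy => hD h (Set.mem_singleton_iff.mp hexy ▸ he)⟩⟩

def replaceEdge [DecidableEq V] {x y : V} (p : G.Walk x y) (hp : p.IsPath) (hxy : x ≠ y)
    (hverts : ∀ w ∈ p.support, w ∈ D.verts → w = x ∨ w = y)
    (hf : ∀ z, D.f z ∈ p.support → D.f z = x ∨ D.f z = y) : SubdivisionIn G H where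
  f := D.f
  inj := D.inj
  path u v h := Walk.replaceEdge p (D.path h)
  isPath u v h := hp.replaceEdge (D.isPath h) fun w hw hwp => hverts w hwp ⟨u, v, h, hw⟩
  internal_not_branch u v h w hw hz := by
    rcases mem_support_replaceEdge hw with hw | ⟨hwp, hxy⟩
    · exact D.internal_not_branch h w hw hz
    · obtain ⟨z, rfl⟩ := hz
      exact D.internal_not_branch h _
        (mem_support_of_mem_edges hxy (Sym2.mem_iff.mpr (hf z hwp))) ⟨z, rfl⟩
  internal_disjoint u v u' v' h h' hne w hw hw' := by
    rcases mem_support_replaceEdge hw with hw | ⟨hwp, hxy₁⟩ <;>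
      rcases mem_support_replaceEdge hw' with hw' | ⟨hwp', hxy₂⟩
    · exact D.internal_disjoint h h' hne w hw hw'
    · exact D.internal_disjoint h h' hne w hw
        (mem_support_of_mem_edges hxy₂ (Sym2.mem_iff.mpr (hverts w hwp' ⟨u, v, h, hw⟩)))
    · exact D.internal_disjoint h h' hne w
        (mem_support_of_mem_edges hxy₁ (Sym2.mem_iff.mpr (hverts w hwp ⟨u', v', h', hw'⟩))) hw'
    · exact absurd (D.sym2_eq_of_mem_support hxy (fst_mem_support_of_mem_edges _ hxy₁)
        (snd_mem_support_of_mem_edges _ hxy₁) (fst_mem_support_of_mem_edges _ hxy₂)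
        (snd_mem_support_of_mem_edges _ hxy₂)) hne

theorem mk_notMem_edges_replaceEdge [DecidableEq V] {x y : V} {p : G.Walk x y}
    (hp : p.IsPath) (hxy : x ≠ y) (hverts : ∀ w ∈ p.support, w ∈ D.verts → w = x ∨ w = y)
    (hf : ∀ z, D.f z ∈ p.support → D.f z = x ∨ D.f z = y) (hpxy : s(x, y) ∉ p.edges)
    ⦃u v : W⦄ (h : H.Adj u v) : s(x, y) ∉ ((D.replaceEdge p hp hxy hverts hf).path h).edges :=
  fun he => (mem_edges_replaceEdge hpxy he).2 rfl

variable {x y : V} {p : G.Walk x y}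

theorem getVert_ne_f_of_hasThreeNeighbors (hp : IsFlatPath G p) {b : W}
    (hb : HasThreeNeighbors H b) {j : ℕ} (h0 : 0 < j) (hj : j < p.length) :
    p.getVert j ≠ D.f b :=
  fun h => D.not_hasThreeNeighbors (h ▸ hp.ncard_neighborSet_getVert h0 hj) hb

variable (hH : HasThreeNeighborsOrBetween H) (hD : D.IsSymmetric) (hp : IsFlatPath G p)
  {u₀ v₀ : W} (h₀ : H.Adj u₀ v₀) (he₀ : s(x, y) ∈ (D.path h₀).edges)
include hH hD hp h₀ he₀

theorem getVert_ne_f_of_mem_edges (z : W) {m : ℕ} (h0 : 0 < m) (hm : m < p.length) :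
    p.getVert m ≠ D.f z := by
  intro hmz
  obtain h3 | ⟨b₁, b₂, hb, hnadj, hzb₁, hzb₂, h3₁, h3₂⟩ := hH z
  · exact D.getVert_ne_f_of_hasThreeNeighbors hp h3 h0 hm hmz
  -- The paths from `D.f z` to `D.f b₁` and `D.f b₂` leave along the two edges of `p` at it, and
  -- cannot stop before reaching `x` and `y`.
  have hsnd : ∀ ⦃b⦄ (h : H.Adj z b),
      (D.path h).snd = p.getVert (m - 1) ∨ (D.path h).snd = p.getVert (m + 1) := by
    have hnbr : ∀ w, G.Adj (D.f z) w → w = p.getVert (m - 1) ∨ w = p.getVert (m + 1) := by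
      intro w hw
      rw [← hmz, ← mem_neighborSet, hp.neighborSet_getVert h0 hm] at hw
      exact hw
    exact fun b h => hnbr _ ((D.path h).adj_snd (not_nil_of_ne (D.inj.ne h.ne)))
  have hx : ∀ ⦃b⦄ (h : H.Adj z b), HasThreeNeighbors H b →
      (D.path h).snd = p.getVert (m - 1) → x ∈ (D.path h).support := fun b h h3 =>
    hp.start_mem_support_of_snd_eq h0 hm (D.isPath h) hmz
      fun j hj hjl => D.getVert_ne_f_of_hasThreeNeighbors hp h3 hj hjl
  have hy : ∀ ⦃b⦄ (h : H.Adj z b), HasThreeNeighbors H b →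
      (D.path h).snd = p.getVert (m + 1) → y ∈ (D.path h).support := fun b h h3 =>
    hp.end_mem_support_of_snd_eq h0 hm (D.isPath h) hmz
      fun j hj hjl => D.getVert_ne_f_of_hasThreeNeighbors hp h3 hj hjl
  have hxz : x ≠ D.f z := hmz ▸ (hp.getVert_ne_start h0 hm.le).symm
  have hyz : y ≠ D.f z := hmz ▸ (hp.getVert_ne_end hm).symm
  have hx₀ := (D.path h₀).fst_mem_support_of_mem_edges he₀
  have hy₀ := (D.path h₀).snd_mem_support_of_mem_edges he₀
  rcases hsnd hzb₁ with h₁ | h₁ <;> rcases hsnd hzb₂ with h₂ | h₂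
  · exact D.snd_ne_snd hzb₁ hzb₂ hb (h₁.trans h₂.symm)
  · exact hnadj (D.adj_of_mem_support hD h₀ hzb₁ hzb₂ hb hx₀ hy₀ (hx hzb₁ h3₁ h₁)
      (hy hzb₂ h3₂ h₂) hxz hyz)
  · exact hnadj (D.adj_of_mem_support hD h₀ hzb₂ hzb₁ hb.symm hx₀ hy₀ (hx hzb₂ h3₂ h₂)
      (hy hzb₁ h3₁ h₁) hxz hyz).symm
  · exact D.snd_ne_snd hzb₁ hzb₂ hb (h₁.trans h₂.symm)

theorem eq_or_eq_of_f_mem_support (z : W) (hz : D.f z ∈ p.support) :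
    D.f z = x ∨ D.f z = y := by
  by_contra! hzxy
  obtain ⟨m, h0, hm, hmz⟩ := exists_getVert_eq_of_mem_support hz hzxy.1 hzxy.2
  exact D.getVert_ne_f_of_mem_edges hH hD hp h₀ he₀ z h0 hm hmz

theorem eq_or_eq_of_mem_verts (hxy : G.Adj x y) (w : V) (hwp : w ∈ p.support)
    (hw : w ∈ D.verts) : w = x ∨ w = y := by
  obtain ⟨u, v, h, hw⟩ := hw
  by_contra! hwxy
  obtain ⟨i, h0, hi, rfl⟩ := exists_getVert_eq_of_mem_support hwp hwxy.1 hwxy.2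
  have hends : ∀ j, 0 < j → j < p.length → p.getVert j ≠ D.f u ∧ p.getVert j ≠ D.f v :=
    fun j hj hjl => ⟨D.getVert_ne_f_of_mem_edges hH hD hp h₀ he₀ u hj hjl,
      D.getVert_ne_f_of_mem_edges hH hD hp h₀ he₀ v hj hjl⟩
  have hsupp := hp.support_subset_of_getVert_mem (D.isPath h) hends h0 hi hw
  have hsame : s(u₀, v₀) = s(u, v) := D.sym2_eq_of_mem_support hxy.ne
    ((D.path h₀).fst_mem_support_of_mem_edges he₀) ((D.path h₀).snd_mem_support_of_mem_edges he₀)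
    (hsupp p.start_mem_support) (hsupp p.end_mem_support)
  refine (hp.isCycle_cons hxy).not_edges_subset_of_isPath (D.isPath h) ?_
  rw [edges_cons, List.cons_subset, Sym2.eq_swap]
  exact ⟨(D.mem_edges_iff_of_sym2_eq hD h₀ h hsame).mp he₀,
    hp.edges_subset_of_support_subset (D.isPath h) hends hsupp⟩

end SubdivisionIn

theorem ContainsSubdivision.exists_isSymmetric {V : Type u} {W : Type*} {G : SimpleGraph V}
    {H : SimpleGraph W} (hGH : ContainsSubdivision G H) :
    ∃ D : SubdivisionIn G H, D.IsSymmetric := by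
  obtain ⟨D⟩ := hGH
  let _ := IsWellOrder.linearOrder (α := W) WellOrderingRel
  exact ⟨D.symmetrize, D.isSymmetric_symmetrize⟩

theorem ContainsSubdivision.deleteEdges_of_compliant {V : Type u} {W : Type*}
    {G : SimpleGraph V} {H : SimpleGraph W} (hH : HasThreeNeighborsOrBetween H) {x y : V}
    (hc : Compliant G x y) (hGH : ContainsSubdivision G H) :
    ContainsSubdivision (G.deleteEdges {s(x, y)}) H := by
  classical
  obtain ⟨hxy, p, hp⟩ := hc
  obtain ⟨D, hD⟩ := hGH.exists_isSymmetric
  by_cases hE : ∃ (u v : W) (h : H.Adj u v), s(x, y) ∈ (D.path h).edges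
  · obtain ⟨u₀, v₀, h₀, he₀⟩ := hE
    exact SubdivisionIn.containsSubdivision_deleteEdges _
      (D.mk_notMem_edges_replaceEdge hp.1 hxy.ne (D.eq_or_eq_of_mem_verts hH hD hp h₀ he₀ hxy)
        (D.eq_or_eq_of_f_mem_support hH hD hp h₀ he₀) hp.mk_notMem_edges)
  · push Not at hE
    exact D.containsSubdivision_deleteEdges hE

theorem hasThreeNeighborsOrBetween_top : HasThreeNeighborsOrBetween (⊤ : SimpleGraph (Fin 4)) := by
  intro z
  left
  simp only [HasThreeNeighbors, top_adj]
  revert z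
  decide

theorem hasThreeNeighborsOrBetween_completeBipartiteGraph :
    HasThreeNeighborsOrBetween (completeBipartiteGraph (Fin 2) (Fin 3)) := by
  have h3 : ∀ i, HasThreeNeighbors (completeBipartiteGraph (Fin 2) (Fin 3)) (.inl i) := fun i =>
    ⟨.inr 0, .inr 1, .inr 2, by decide, by decide, by decide, by simp, by simp, by simp⟩
  rintro (i | j)
  · exact .inl (h3 i)
  · exact .inr ⟨.inl 0, .inl 1, by decide, by simp, by simp, by simp, h3 0, h3 1⟩

/-- If `e = xy` is a compliant edge of `G` and `G - e` is outerplanar,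
then `G` is outerplanar. -/
theorem stmt1 {V : Type u} (G : SimpleGraph V) (x y : V)
    (hc : Compliant G x y)
    (hop : Outerplanar (G.deleteEdges {s(x, y)})) :
    Outerplanar G :=
  ⟨fun hK₄ => hop.1 (hK₄.deleteEdges_of_compliant hasThreeNeighborsOrBetween_top hc),
    fun hK₂₃ => hop.2
      (hK₂₃.deleteEdges_of_compliant hasThreeNeighborsOrBetween_completeBipartiteGraph hc)⟩
end

section
/- Let G be a 2-connected graph with no compliant edges that is not a cycle, let xy be an edge of G, let S be the vertex set of a connected component of G - {x,y}, and let H be the subgraph of G induced on S ∪ {x,y}. Then H is 2-connected. -/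
open SimpleGraph

universe u

/-!
Deleting a vertex `v` from `G[S ∪ {x, y}]` leaves `x` or `y`, and what is left of `{x, y}` is
connected through the edge `xy`. Any other vertex `w ∈ S` is joined to a surviving vertex of
`{x, y}` by a path of `G - v`; the segment of that path up to its first vertex in `{x, y}` cannot
leave the component `S` before that, so it lies in `G[S ∪ {x, y}] - v`.
-/

namespace SimpleGraph

variable {V : Type u} {G : SimpleGraph V}

lemma exists_walk_avoiding_of_connected_deleteVerts {v w t : V}
    (hG : ((⊤ : G.Subgraph).deleteVerts {v}).coe.Connected) (hw : w ≠ v) (ht : t ≠ v) :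
    ∃ p : G.Walk w t, v ∉ p.support := by
  obtain ⟨p⟩ := hG.preconnected ⟨w, by simp [hw]⟩ ⟨t, by simp [ht]⟩
  refine ⟨p.map (Subgraph.hom _), fun hv => ?_⟩
  obtain ⟨u, -, hu⟩ := List.mem_map.1 ((Walk.support_map _ p) ▸ hv)
  exact u.2.2 (Set.mem_singleton_iff.2 hu)

def deleteVertsInduceIso {U : Set V} (v : U) :
    ((⊤ : (G.induce U).Subgraph).deleteVerts {v}).coe ≃g G.induce (U \ {(v : V)}) where
  toFun a := ⟨a.1.1, a.1.2, fun h => a.2.2 (Subtype.ext h)⟩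
  invFun b := ⟨⟨b.1, b.2.1⟩, Set.mem_univ _, fun h => b.2.2 (congrArg Subtype.val h)⟩
  map_rel_iff' {a b} := by
    simp only [Equiv.coe_fn_mk, comap_adj, Function.Embedding.coe_subtype,
      Subgraph.coe_adj, Subgraph.deleteVerts_adj, Subgraph.top_adj]
    exact ⟨fun h => ⟨a.2.1, a.2.2, b.2.1, b.2.2, h⟩, fun h => h.2.2.2.2⟩

namespace ConnectedComponent

variable {X : Set V} (c : (G.induce Xᶜ).ConnectedComponent)

lemma val_mem_image_supp_of_adj {a b : V} (ha : a ∈ Subtype.val '' c.supp) (hab : G.Adj a b)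
    (hb : b ∉ X) : b ∈ Subtype.val '' c.supp := by
  obtain ⟨a, ha, rfl⟩ := ha
  exact ⟨⟨b, hb⟩, c.mem_supp_of_adj_mem_supp ha (induce_adj.2 hab), rfl⟩

lemma exists_walk_to_boundary {w t : V} (p : G.Walk w t) (hw : w ∈ Subtype.val '' c.supp)
    (ht : t ∈ X) : ∃ z ∈ X, ∃ q : G.Walk w z,
      ∀ u ∈ q.support, u ∈ p.support ∧ u ∈ Subtype.val '' c.supp ∪ X := by
  induction p with
  | nil =>
    obtain ⟨w', -, rfl⟩ := hw
    exact absurd ht w'.2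
  | @cons w m t hwm p ih =>
    by_cases hm : m ∈ X
    · refine ⟨m, hm, .cons hwm .nil, fun u hu => ?_⟩
      simp only [Walk.support_cons, Walk.support_nil, List.mem_cons, List.not_mem_nil, or_false] at hu
      rcases hu with rfl | rfl
      · exact ⟨by simp, Or.inl hw⟩
      · exact ⟨by simp, Or.inr hm⟩
    · obtain ⟨z, hz, q, hq⟩ := ih (c.val_mem_image_supp_of_adj hw hwm hm) ht
      refine ⟨z, hz, .cons hwm q, fun u hu => ?_⟩
      rw [Walk.support_cons, List.mem_cons] at hu
      rcases hu with rfl | hu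
      · exact ⟨by simp, Or.inl hw⟩
      · exact ⟨by simp [(hq u hu).1], (hq u hu).2⟩

lemma three_le_card_image_supp_union_pair [Finite V] {x y : V} (hxy : x ≠ y)
    (c : (G.induce ({x, y}ᶜ : Set V)).ConnectedComponent) :
    3 ≤ Nat.card ↥(Subtype.val '' c.supp ∪ {x, y}) := by
  obtain ⟨s, hs⟩ := c.nonempty_supp
  have hsxy : (s : V) ∉ ({x, y} : Set V) := s.2
  simp only [Set.mem_insert_iff, Set.mem_singleton_iff, not_or] at hsxy
  rw [Nat.card_coe_set_eq]
  calc 3 = ({(s : V), x, y} : Set V).ncard :=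
        (Set.ncard_eq_three.2 ⟨_, _, _, hsxy.1, hsxy.2, hxy, rfl⟩).symm
    _ ≤ _ := Set.ncard_le_ncard
        (Set.insert_subset (Set.mem_union_left _ (Set.mem_image_of_mem _ hs)) Set.subset_union_right) (Set.toFinite _)

lemma connected_induce_image_supp_union_pair_sdiff {x y v : V}
    (hG : ((⊤ : G.Subgraph).deleteVerts {v}).coe.Connected) (hxy : G.Adj x y)
    (c : (G.induce ({x, y}ᶜ : Set V)).ConnectedComponent) :
    (G.induce ((Subtype.val '' c.supp ∪ {x, y}) \ {v})).Connected := by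
  set T := (Subtype.val '' c.supp ∪ {x, y}) \ {v}
  obtain ⟨t, htxy, htv⟩ : ∃ t ∈ ({x, y} : Set V), t ≠ v := by
    by_cases hxv : x = v
    · exact ⟨y, by simp, hxv ▸ hxy.ne'⟩
    · exact ⟨x, by simp, hxv⟩
  have ht : t ∈ T := ⟨Or.inr htxy, htv⟩
  have reachable_pair (z : V) (hz : z ∈ T) (hzxy : z ∈ ({x, y} : Set V)) :
      (G.induce T).Reachable ⟨t, ht⟩ ⟨z, hz⟩ := by
    obtain rfl | hzt := eq_or_ne z t
    · rfl
    have htz : G.Adj t z := by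
      simp only [Set.mem_insert_iff, Set.mem_singleton_iff] at htxy hzxy
      rcases htxy with rfl | rfl <;> rcases hzxy with rfl | rfl <;> first
        | exact absurd rfl hzt | exact hxy | exact hxy.symm
    exact (induce_adj.2 htz).reachable
  rw [connected_iff_exists_forall_reachable]
  refine ⟨⟨t, ht⟩, ?_⟩
  rintro ⟨w, hw⟩
  rcases hw.1 with hwS | hwxy
  · obtain ⟨p, hpv⟩ := exists_walk_avoiding_of_connected_deleteVerts hG hw.2 htv
    obtain ⟨z, hzxy, q, hq⟩ := c.exists_walk_to_boundary p hwS htxy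
    have hqT : ∀ u ∈ q.support, u ∈ T :=
      fun u hu => ⟨(hq u hu).2, fun huv => hpv (huv ▸ (hq u hu).1)⟩
    exact (reachable_pair z _ hzxy).trans (q.induce T hqT).reachable.symm
  · exact reachable_pair w hw hwxy

end ConnectedComponent

end SimpleGraph

theorem stmt4_general {V : Type u} [Finite V] (G : SimpleGraph V)
    (h2 : TwoConnected G)
    (x y : V) (hxy : G.Adj x y) (S : Set V)
    (hS : ∃ c : (G.induce ({x, y}ᶜ : Set V)).ConnectedComponent,
        S = Subtype.val '' c.supp) :
    TwoConnected (G.induce (S ∪ {x, y})) := by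
  obtain ⟨c, rfl⟩ := hS
  refine ⟨c.three_le_card_image_supp_union_pair hxy.ne, fun v => ?_⟩
  rw [(deleteVertsInduceIso v).connected_iff]
  exact c.connected_induce_image_supp_union_pair_sdiff (h2.2 v) hxy

/-- Let `G` be a 2-connected graph with no compliant edges that is not a cycle,
let `xy` be an edge, `S` the vertex set of a connected component of `G - {x,y}`,
and `H` the subgraph induced on `S ∪ {x,y}`. Then `H` is 2-connected. -/
theorem stmt4 {V : Type u} [Finite V] (G : SimpleGraph V)
    (h2 : TwoConnected G) (hnc : ¬ IsCycleGraph G)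
    (hcomp : ∀ x y : V, ¬ Compliant G x y)
    (x y : V) (hxy : G.Adj x y) (S : Set V)
    (hS : ∃ c : (G.induce ({x, y}ᶜ : Set V)).ConnectedComponent,
        S = Subtype.val '' c.supp) :
    TwoConnected (G.induce (S ∪ {x, y})) :=
  stmt4_general G h2 x y hxy S hS
end

section
/- Let G be a 2-connected graph in which every cycle passes through vertex x or vertex y, and suppose there are at least two internally disjoint flat x-y paths in G. If u, v are vertices of G and Q is a path from u to v internally disjoint from a fixed x-y path P containing u and v, then {u,v} ∩ {x,y} is nonempty whenever u, v both lie on P. -/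
open SimpleGraph

universe u

/-! Since every cycle meets `x` or `y`, `G - {x, y}` is a forest, so `u` and `v` cannot be
joined in it by two different paths. But if `u, v ∉ {x, y}`, the segment of `P` between `u`
and `v` and the path `Q` both avoid `x` and `y`, and they differ because `Q` uses an edge
outside `P`. -/

namespace SimpleGraph

variable {V : Type u} {G : SimpleGraph V}

lemma isAcyclic_induce_compl_of_forall_isCycle {s : Set V}
    (h : ∀ (w : V) (c : G.Walk w w), c.IsCycle → ∃ z ∈ s, z ∈ c.support) :
    (G.induce sᶜ).IsAcyclic := by
  intro w c hc
  obtain ⟨z, hzs, hzc⟩ :=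
    h _ _ (hc.map (f := (Embedding.induce sᶜ).toHom) Subtype.val_injective)
  rw [Walk.support_map, List.mem_map] at hzc
  obtain ⟨z', -, rfl⟩ := hzc
  exact z'.2 hzs

lemma IsAcyclic.eq_of_isPath_of_support_subset {s : Set V} (h : (G.induce s).IsAcyclic)
    {u v : V} {p q : G.Walk u v} (hp : p.IsPath) (hq : q.IsPath)
    (hps : ∀ z ∈ p.support, z ∈ s) (hqs : ∀ z ∈ q.support, z ∈ s) : p = q := by
  have := h.subsingleton_path ⟨u, hps u p.start_mem_support⟩ ⟨v, hps v p.end_mem_support⟩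
  have key : (⟨p.induce s hps, (p.map_induce hps ▸ hp).of_map⟩ : (G.induce s).Path _ _) =
      ⟨q.induce s hqs, (q.map_induce hqs ▸ hq).of_map⟩ := Subsingleton.elim _ _
  simpa using congrArg (fun r => r.1.map (Embedding.induce s).toHom) key

namespace Walk

variable [DecidableEq V]

lemma start_notMem_support_dropUntil {a b w : V} {p : G.Walk a b} (hp : p.IsPath)
    (hw : w ∈ p.support) (h : a ≠ w) : a ∉ (p.dropUntil w hw).support := by
  have hnd := hp.support_nodup
  rw [← p.take_spec hw, support_append, List.nodup_append] at hnd
  rw [mem_support_iff]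
  rintro (ha | ha)
  · exact h ha
  · exact hnd.2.2 _ (p.takeUntil w hw).start_mem_support _ ha rfl

lemma IsPath.exists_isPath_avoiding_endpoints {a b u v : V} {p : G.Walk a b} (hp : p.IsPath)
    (hu : u ∈ p.support) (hua : u ≠ a) (hub : u ≠ b)
    (hv : v ∈ p.support) (hva : v ≠ a) (hvb : v ≠ b) :
    ∃ q : G.Walk u v,
      q.IsPath ∧ a ∉ q.support ∧ b ∉ q.support ∧ q.edges ⊆ p.edges := by
  rw [← p.take_spec hu, mem_support_append_iff] at hv
  rcases hv with hv | hv
  · refine ⟨((p.takeUntil u hu).dropUntil v hv).reverse,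
      ((hp.takeUntil hu).dropUntil hv).reverse, ?_, ?_, ?_⟩
    · rw [support_reverse, List.mem_reverse]
      exact start_notMem_support_dropUntil (hp.takeUntil hu) hv hva.symm
    · rw [support_reverse, List.mem_reverse]
      exact fun hb => endpoint_notMem_support_takeUntil hp hu hub.symm
        ((p.takeUntil u hu).support_dropUntil_subset_support hv hb)
    · rw [edges_reverse]
      exact fun e he => p.edges_takeUntil_subset_edges hu
        ((p.takeUntil u hu).edges_dropUntil_subset_edges hv (List.mem_reverse.mp he))
  · refine ⟨(p.dropUntil u hu).takeUntil v hv, (hp.dropUntil hu).takeUntil hv, ?_, ?_, ?_⟩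
    · exact fun ha => start_notMem_support_dropUntil hp hu hua.symm
        ((p.dropUntil u hu).support_takeUntil_subset_support hv ha)
    · exact endpoint_notMem_support_takeUntil (hp.dropUntil hu) hv hvb.symm
    · exact fun e he => p.edges_dropUntil_subset_edges hu
        ((p.dropUntil u hu).edges_takeUntil_subset_edges hv he)

end Walk

end SimpleGraph

theorem stmt8_general {V : Type u} (G : SimpleGraph V)
    (x y : V)
    (hcyc : ∀ (w : V) (c : G.Walk w w), c.IsCycle → x ∈ c.support ∨ y ∈ c.support)
    (P : G.Walk x y) (hP : P.IsPath)
    (u v : V) (Q : G.Walk u v) (hQ : Q.IsPath) (hQne : 0 < Q.length)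
    (hint : ∀ w ∈ Q.support, w ≠ u → w ≠ v → w ∉ P.support)
    (hedge : ∀ e ∈ Q.edges, e ∉ P.edges)
    (hu : u ∈ P.support) (hv : v ∈ P.support) :
    u = x ∨ u = y ∨ v = x ∨ v = y := by
  classical
  by_contra! hne
  obtain ⟨hux, huy, hvx, hvy⟩ := hne
  have hforest : (G.induce {x, y}ᶜ).IsAcyclic :=
    isAcyclic_induce_compl_of_forall_isCycle fun w c hc => by simpa using hcyc w c hc
  obtain ⟨S, hS, hxS, hyS, hSP⟩ := hP.exists_isPath_avoiding_endpoints hu hux huy hv hvx hvy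
  have hQxy : ∀ z ∈ Q.support, z ≠ x ∧ z ≠ y := by
    intro z hz
    rcases eq_or_ne z u with rfl | hzu
    · exact ⟨hux, huy⟩
    rcases eq_or_ne z v with rfl | hzv
    · exact ⟨hvx, hvy⟩
    have hzP := hint z hz hzu hzv
    exact ⟨fun h => hzP (h ▸ P.start_mem_support), fun h => hzP (h ▸ P.end_mem_support)⟩
  have hQS : Q = S := hforest.eq_of_isPath_of_support_subset hQ hS
    (fun z hz => by simpa using hQxy z hz)
    (fun z hz => by simpa using ⟨ne_of_mem_of_not_mem hz hxS, ne_of_mem_of_not_mem hz hyS⟩)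
  obtain ⟨e, he⟩ := List.exists_mem_of_length_pos (Q.length_edges ▸ hQne)
  exact hedge e he (hSP (hQS ▸ he))

/-- In a 2-connected graph in which every cycle passes through `x` or `y` and
which has two internally disjoint flat `x`-`y` paths: if `P` is an `x`-`y` path
and `Q` is a `u`-`v` path internally disjoint from `P`, then whenever both `u`
and `v` lie on `P`, the set `{u,v} ∩ {x,y}` is nonempty. -/
theorem stmt8 {V : Type u} [Finite V] (G : SimpleGraph V)
    (h2 : TwoConnected G) (x y : V)
    (hcyc : ∀ (w : V) (c : G.Walk w w), c.IsCycle → x ∈ c.support ∨ y ∈ c.support)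
    (hflat : ∃ p q : G.Walk x y, IsFlatPath G p ∧ IsFlatPath G q ∧
      (∀ w ∈ p.support, w ∈ q.support → w = x ∨ w = y))
    (P : G.Walk x y) (hP : P.IsPath)
    (u v : V) (Q : G.Walk u v) (hQ : Q.IsPath) (hQne : 0 < Q.length)
    (hint : ∀ w ∈ Q.support, w ≠ u → w ≠ v → w ∉ P.support)
    (hedge : ∀ e ∈ Q.edges, e ∉ P.edges)
    (hu : u ∈ P.support) (hv : v ∈ P.support) :
    u = x ∨ u = y ∨ v = x ∨ v = y :=
  stmt8_general G x y hcyc P hP u v Q hQ hQne hint hedge hu hv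
end

section
/- In a 2-connected graph G, for every vertex z there exist two paths from z to a given cycle C (with z not on C) that are disjoint except at z and meet C only at their endpoints; in particular, concatenating them gives a path of length at least 2 intersecting C exactly at its two endpoints. -/
open SimpleGraph

universe u

/-!
Induction along a walk from `z` to the cycle `C`. Suppose `z` is adjacent to `z' ∉ C` and `z'` has
a fan: two paths to `C` sharing only `z'` and meeting `C` only at their (distinct) ends. As
`G - z'` is connected, a walk from `z` avoiding `z'` first meets `C` or the fan at some `t`. The
edge `zz'` followed by a leg not containing `t`, together with the walk to `t` followed by the rest
of the other leg (if `t` lies on it), is a fan at `z`. Joining the two legs of a fan at `z` gives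
the required path through `z`.
-/

namespace SimpleGraph.Walk

variable {V : Type*} {G : SimpleGraph V}

theorem IsPath.append_of_support_inter {u v w : V} {p : G.Walk u v} {q : G.Walk v w}
    (hp : p.IsPath) (hq : q.IsPath) (h : ∀ x ∈ p.support, x ∈ q.support → x = v) :
    (p.append q).IsPath := by
  have hq' := hq.support_nodup
  rw [← cons_tail_support] at hq'
  rw [isPath_def, support_append, List.nodup_append]
  refine ⟨hp.support_nodup, hq'.of_cons, fun x hxp y hyq hxy => ?_⟩
  subst hxy
  have hxv : x = v := h x hxp (List.mem_of_mem_tail hyq)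
  exact (List.nodup_cons.mp hq').1 (hxv ▸ hyq)

theorem IsPath.eq_of_mem_takeUntil_of_mem_dropUntil [DecidableEq V] {u v x w : V}
    {p : G.Walk u v} (hp : p.IsPath) (hx : x ∈ p.support)
    (h₁ : w ∈ (p.takeUntil x hx).support) (h₂ : w ∈ (p.dropUntil x hx).support) : w = x := by
  have hnd := hp.support_nodup
  rw [← p.take_spec hx, support_append] at hnd
  rw [← cons_tail_support] at h₂
  rcases List.mem_cons.mp h₂ with h₂ | h₂
  · exact h₂
  · exact absurd h₂ (List.disjoint_of_nodup_append hnd h₁)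

theorem exists_walk_first_mem (T : Set V) {x y : V} (w : G.Walk x y) (hy : y ∈ T) :
    ∃ t ∈ T, ∃ p : G.Walk x t, p.support ⊆ w.support ∧
      ∀ v ∈ p.support, v ∈ T → v = t := by
  classical
  obtain ⟨t, hts, ht, hfirst⟩ := w.exists_mem_support_forall_mem_support_imp_eq
    {v ∈ w.support.toFinset | v ∈ T} ⟨y, by simp [hy]⟩
  refine ⟨t, (Finset.mem_filter.mp hts).2, w.takeUntil t ht,
    w.support_takeUntil_subset_support ht, fun v hv hvT => hfirst v ?_ hv⟩
  simpa [hvT] using w.support_takeUntil_subset_support ht hv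

end SimpleGraph.Walk

namespace SimpleGraph

open Walk

variable {V : Type*} {G : SimpleGraph V} (S : Set V)

structure IsFan {z u v : V} (p : G.Walk z u) (q : G.Walk z v) : Prop where
  isPath_left : p.IsPath
  isPath_right : q.IsPath
  eq_of_mem_of_mem : ∀ w ∈ p.support, w ∈ q.support → w = z
  eq_of_mem_left : ∀ w ∈ p.support, w ∈ S → w = u
  eq_of_mem_right : ∀ w ∈ q.support, w ∈ S → w = v

variable (G) in
def HasFan (z : V) : Prop :=
  ∃ u v, u ∈ S ∧ v ∈ S ∧ u ≠ v ∧ ∃ (p : G.Walk z u) (q : G.Walk z v), IsFan S p q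

variable {S}

theorem IsFan.symm {z u v : V} {p : G.Walk z u} {q : G.Walk z v} (h : IsFan S p q) :
    IsFan S q p :=
  ⟨h.isPath_right, h.isPath_left, fun w hq hp => h.eq_of_mem_of_mem w hp hq, h.eq_of_mem_right,
    h.eq_of_mem_left⟩

theorem IsFan.isPath_append {z u v : V} {p : G.Walk z u} {q : G.Walk z v} (h : IsFan S p q) :
    (p.reverse.append q).IsPath :=
  h.isPath_left.reverse.append_of_support_inter h.isPath_right fun w hw =>
    h.eq_of_mem_of_mem w (by simpa using hw)

theorem IsFan.eq_or_eq_of_mem_append {z u v : V} {p : G.Walk z u} {q : G.Walk z v}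
    (h : IsFan S p q) : ∀ w ∈ (p.reverse.append q).support, w ∈ S → w = u ∨ w = v := by
  intro w hw hwS
  rcases (mem_support_append_iff _ _).mp hw with hw | hw
  · exact Or.inl (h.eq_of_mem_left w (by simpa using hw) hwS)
  · exact Or.inr (h.eq_of_mem_right w hw hwS)

theorem HasFan.of_walks {z u v : V} (hu : u ∈ S) (hv : v ∈ S) (huv : u ≠ v)
    (p : G.Walk z u) (q : G.Walk z v) (hpq : ∀ w ∈ p.support, w ∈ q.support → w = z)
    (hp : ∀ w ∈ p.support, w ∈ S → w = u) (hq : ∀ w ∈ q.support, w ∈ S → w = v) :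
    HasFan G S z := by
  classical
  exact ⟨u, v, hu, hv, huv, p.bypass, q.bypass, p.bypass_isPath, q.bypass_isPath,
    fun w hwp hwq => hpq w (p.support_bypass_subset_support hwp)
      (q.support_bypass_subset_support hwq),
    fun w hw => hp w (p.support_bypass_subset_support hw),
    fun w hw => hq w (q.support_bypass_subset_support hw)⟩

theorem HasFan.of_adj {z z' u w : V} (hzz' : G.Adj z z') (hz : z ∉ S) (hu : u ∈ S)
    (hw : w ∈ S) (huw : u ≠ w) (p : G.Walk z' u) (hp : ∀ x ∈ p.support, x ∈ S → x = u)
    (b : G.Walk z w) (hb : ∀ x ∈ b.support, x ∈ S → x = w)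
    (hpb : ∀ x ∈ b.support, x ∉ p.support) : HasFan G S z := by
  refine .of_walks hu hw huw (p.cons hzz') b (fun x hxp hxb => ?_) (fun x hx hxS => ?_) hb
  · rw [support_cons, List.mem_cons] at hxp
    exact hxp.resolve_right (hpb x hxb)
  · rw [support_cons, List.mem_cons] at hx
    rcases hx with rfl | hx
    · exact absurd hxS hz
    · exact hp x hx hxS

/- If `z` lies on `q`, then `t = z` and the second leg is just the part of `q` after `z`, so no
separate case is needed when `z` is already on the fan. -/
theorem IsFan.hasFan_of_adj_of_mem_right [DecidableEq V] {z z' u v t : V} {p : G.Walk z' u}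
    {q : G.Walk z' v} (h : IsFan S p q) (hu : u ∈ S) (hv : v ∈ S) (huv : u ≠ v)
    (hzz' : G.Adj z z') (hz : z ∉ S) {b : G.Walk z t} (hz'b : z' ∉ b.support)
    (hb : ∀ x ∈ b.support, x ∈ S ∨ x ∈ p.support ∨ x ∈ q.support → x = t)
    (htq : t ∈ q.support) : HasFan G S z := by
  have htz' : t ≠ z' := by
    rintro rfl
    exact hz'b b.end_mem_support
  have htp : t ∉ p.support := fun htp => htz' (h.eq_of_mem_of_mem t htp htq)
  have hz'd : z' ∉ (q.dropUntil t htq).support := fun hd =>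
    htz' (h.isPath_right.eq_of_mem_takeUntil_of_mem_dropUntil htq (start_mem_support _) hd).symm
  refine .of_adj hzz' hz hu hv huv p h.eq_of_mem_left (b.append (q.dropUntil t htq))
    (fun x hx hxS => ?_) (fun x hx hxp => ?_)
  · rcases (mem_support_append_iff _ _).mp hx with hx | hx
    · exact h.eq_of_mem_right x (hb x hx (Or.inl hxS) ▸ htq) hxS
    · exact h.eq_of_mem_right x (q.support_dropUntil_subset_support htq hx) hxS
  · rcases (mem_support_append_iff _ _).mp hx with hx | hx
    · exact htp (hb x hx (Or.inr (Or.inl hxp)) ▸ hxp)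
    · exact hz'd (h.eq_of_mem_of_mem x hxp (q.support_dropUntil_subset_support htq hx) ▸ hx)

end SimpleGraph

open SimpleGraph Walk

namespace TwoConnected

variable {V : Type*} {G : SimpleGraph V} {S : Set V}

theorem exists_walk_avoiding (h2 : TwoConnected G) {x y b : V} (hx : x ≠ b)
    (hy : y ≠ b) : ∃ w : G.Walk x y, b ∉ w.support := by
  set H := (⊤ : G.Subgraph).deleteVerts {b}
  obtain ⟨w⟩ := (h2.2 b).preconnected ⟨x, trivial, hx⟩ ⟨y, trivial, hy⟩
  refine ⟨w.map H.hom, fun hb => ?_⟩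
  obtain ⟨s, -, hs⟩ := List.mem_map.mp (support_map H.hom w ▸ hb)
  exact s.2.2 hs

theorem exists_walk_first_mem_avoiding (h2 : TwoConnected G) (T : Set V)
    {x y b : V} (hx : x ≠ b) (hy : y ≠ b) (hyT : y ∈ T) :
    ∃ t ∈ T, ∃ p : G.Walk x t, b ∉ p.support ∧
      ∀ v ∈ p.support, v ∈ T → v = t := by
  obtain ⟨w, hbw⟩ := h2.exists_walk_avoiding hx hy
  obtain ⟨t, htT, p, hpw, hpT⟩ := w.exists_walk_first_mem T hyT
  exact ⟨t, htT, p, fun hb => hbw (hpw hb), hpT⟩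

theorem hasFan_of_walk (h2 : TwoConnected G) (hS : S.Nontrivial) {z x : V}
    (w : G.Walk z x) (hx : x ∈ S) (hz : z ∉ S) : HasFan G S z := by
  classical
  induction w with
  | nil => exact absurd hx hz
  | @cons z z' x hzz' w ih =>
    by_cases hz' : z' ∈ S
    · obtain ⟨y, hy, hyz'⟩ := hS.exists_ne z'
      obtain ⟨t, htS, b, hz'b, hb⟩ := h2.exists_walk_first_mem_avoiding S hzz'.ne hyz' hy
      refine .of_adj hzz' hz hz' htS ?_ nil (by simp) b hb fun y hy hy' => ?_
      · rintro rfl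
        exact hz'b b.end_mem_support
      · rw [support_nil, List.mem_singleton] at hy'
        exact hz'b (hy' ▸ hy)
    obtain ⟨u, v, hu, hv, huv, p, q, hpq⟩ := ih hx hz'
    obtain ⟨t, htT, b, hz'b, hb⟩ := h2.exists_walk_first_mem_avoiding
      {y | y ∈ S ∨ y ∈ p.support ∨ y ∈ q.support} hzz'.ne (ne_of_mem_of_not_mem hu hz')
      (Or.inl hu)
    by_cases htp : t ∈ p.support
    · exact hpq.symm.hasFan_of_adj_of_mem_right hv hu huv.symm hzz' hz hz'b
        (fun y hy hyT => hb y hy (hyT.imp_right Or.symm)) htp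
    by_cases htq : t ∈ q.support
    · exact hpq.hasFan_of_adj_of_mem_right hu hv huv hzz' hz hz'b hb htq
    have htS : t ∈ S := htT.resolve_right (not_or.2 ⟨htp, htq⟩)
    refine .of_adj hzz' hz hu htS ?_ p hpq.eq_of_mem_left b (fun y hy hyS => hb y hy (Or.inl hyS))
      fun y hy hyp => htp (hb y hy (Or.inr (Or.inl hyp)) ▸ hyp)
    rintro rfl
    exact htp p.end_mem_support

theorem hasFan (h2 : TwoConnected G) (hS : S.Nontrivial) {z : V} (hz : z ∉ S) :
    HasFan G S z := by
  obtain ⟨x, hx, y, hy, hxy⟩ := hS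
  obtain ⟨w, -⟩ := h2.exists_walk_avoiding (ne_of_mem_of_not_mem hy hz).symm hxy
  exact h2.hasFan_of_walk ⟨x, hx, y, hy, hxy⟩ w hx hz

end TwoConnected

theorem stmt11_general {V : Type u} (G : SimpleGraph V) (h2 : TwoConnected G)
    (a : V) (c : G.Walk a a) (hc : c.IsCycle) (z : V) (hz : z ∉ c.support) :
    ∃ (u v : V), u ∈ c.support ∧ v ∈ c.support ∧ u ≠ v ∧
      ∃ (p : G.Walk z u) (q : G.Walk z v), p.IsPath ∧ q.IsPath ∧
        (∀ w ∈ p.support, w ∈ q.support → w = z) ∧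
        (∀ w ∈ p.support, w ∈ c.support → w = u) ∧
        (∀ w ∈ q.support, w ∈ c.support → w = v) ∧
        ∃ r : G.Walk u v, r.IsPath ∧ 2 ≤ r.length ∧ z ∈ r.support ∧
          (∀ w ∈ r.support, w ∈ c.support → w = u ∨ w = v) := by
  have hC : {w | w ∈ c.support}.Nontrivial :=
    ⟨a, c.start_mem_support, c.snd, c.getVert_mem_support 1, (c.adj_snd hc.not_nil).ne⟩
  obtain ⟨u, v, hu, hv, huv, p, q, hpq⟩ := h2.hasFan hC hz
  have hp : 0 < p.length :=
    not_nil_iff_lt_length.mp (not_nil_of_ne (ne_of_mem_of_not_mem hu hz).symm)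
  have hq : 0 < q.length :=
    not_nil_iff_lt_length.mp (not_nil_of_ne (ne_of_mem_of_not_mem hv hz).symm)
  refine ⟨u, v, hu, hv, huv, p, q, hpq.isPath_left, hpq.isPath_right, hpq.eq_of_mem_of_mem,
    hpq.eq_of_mem_left, hpq.eq_of_mem_right, p.reverse.append q,
    hpq.isPath_append, ?_, ?_, hpq.eq_or_eq_of_mem_append⟩
  · rw [length_append, length_reverse]
    omega
  · exact (mem_support_append_iff _ _).mpr (Or.inr q.start_mem_support)

/-- In a 2-connected graph, for every cycle `C` and every vertex `z` not on `C`
there are two paths from `z` to `C`, disjoint except at `z`, meeting `C` only at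
their endpoints; concatenating them gives a path of length at least 2 meeting
`C` exactly at its two (distinct) endpoints. -/
theorem stmt11 {V : Type u} [Finite V] (G : SimpleGraph V) (h2 : TwoConnected G)
    (a : V) (c : G.Walk a a) (hc : c.IsCycle) (z : V) (hz : z ∉ c.support) :
    ∃ (u v : V), u ∈ c.support ∧ v ∈ c.support ∧ u ≠ v ∧
      ∃ (p : G.Walk z u) (q : G.Walk z v), p.IsPath ∧ q.IsPath ∧
        (∀ w ∈ p.support, w ∈ q.support → w = z) ∧
        (∀ w ∈ p.support, w ∈ c.support → w = u) ∧
        (∀ w ∈ q.support, w ∈ c.support → w = v) ∧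
        ∃ r : G.Walk u v, r.IsPath ∧ 2 ≤ r.length ∧ z ∈ r.support ∧
          (∀ w ∈ r.support, w ∈ c.support → w = u ∨ w = v) :=
  stmt11_general G h2 a c hc z hz
end

section
/- Let G be a 2-connected graph and H a subgraph of G with at least 2 vertices such that V(G) ≠ V(H). Then there exists an H-ear: a path in G of length at least 1 whose endpoints lie in H, whose internal vertices avoid H, and which has at least one internal vertex. -/
open SimpleGraph

universe u

namespace SimpleGraph

variable {V : Type u} {G : SimpleGraph V}

lemma Walk.exists_walk_avoiding_adj_mem_support {S : Set V} :
    ∀ {a b : V} (p : G.Walk a b), a ∉ S → b ∈ S →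
      ∃ c u, G.Adj c u ∧ u ∈ S ∧ u ∈ p.support ∧
        ∃ q : G.Walk a c, ∀ w ∈ q.support, w ∉ S
  | _, _, .nil, ha, hb => absurd hb ha
  | a, _, .cons (v := a') h p, ha, hb => by
    by_cases ha' : a' ∈ S
    · exact ⟨a, a', h, ha', by simp, .nil, by simpa using ha⟩
    · obtain ⟨c, u, hcu, huS, hup, q, hq⟩ := p.exists_walk_avoiding_adj_mem_support ha' hb
      refine ⟨c, u, hcu, huS, by simp [hup], .cons h q, ?_⟩
      simpa using ⟨ha, hq⟩

lemma TwoConnected.exists_walk_not_mem_support (h : TwoConnected G) {a b v : V}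
    (ha : a ≠ v) (hb : b ≠ v) : ∃ p : G.Walk a b, v ∉ p.support := by
  set G' := (⊤ : G.Subgraph).deleteVerts {v}
  obtain ⟨p⟩ := h.2 v ⟨a, by simp [ha]⟩ ⟨b, by simp [hb]⟩
  refine ⟨p.map G'.hom, fun hv => ?_⟩
  obtain ⟨w, -, hw⟩ := List.mem_map.mp (Walk.support_map G'.hom p ▸ hv)
  exact (by simpa [G'] using w.2 : (w : V) ≠ v) hw

lemma exists_ear_of_walk_avoiding {S : Set V} {u₁ c₁ c₂ u₂ : V} (hu₁ : u₁ ∈ S) (hu₂ : u₂ ∈ S)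
    (hne : u₁ ≠ u₂) (h₁ : G.Adj u₁ c₁) (h₂ : G.Adj c₂ u₂) (q : G.Walk c₁ c₂)
    (hq : ∀ w ∈ q.support, w ∉ S) :
    ∃ p : G.Walk u₁ u₂, p.IsPath ∧ 2 ≤ p.length ∧
      ∀ w ∈ p.support, w ≠ u₁ → w ≠ u₂ → w ∉ S := by
  classical
  have hq' : ∀ w ∈ q.bypass.support, w ∉ S :=
    fun w hw => hq w (q.support_bypass_subset_support hw)
  refine ⟨.cons h₁ (q.bypass.concat h₂), ?_, by simp, ?_⟩
  · refine (Walk.cons_isPath_iff _ _).2 ⟨q.bypass_isPath.concat (fun h => hq' _ h hu₂) h₂, ?_⟩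
    simpa [Walk.support_concat, hne] using fun h => hq' _ h hu₁
  · intro w hw hw₁ hw₂
    simp only [Walk.support_cons, Walk.support_concat, List.mem_cons, List.mem_append,
      List.not_mem_nil, or_false] at hw
    rcases hw with rfl | hw | rfl
    exacts [absurd rfl hw₁, hq' w hw, absurd rfl hw₂]

end SimpleGraph

theorem stmt12_general {V : Type u} (G : SimpleGraph V) (h2 : TwoConnected G)
    (H : G.Subgraph) (hcard : 2 ≤ H.verts.ncard) (hne : H.verts ≠ Set.univ) :
    ∃ (u v : V), u ∈ H.verts ∧ v ∈ H.verts ∧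
      ∃ p : G.Walk u v, p.IsPath ∧ 2 ≤ p.length ∧
        ∀ w ∈ p.support, w ≠ u → w ≠ v → w ∉ H.verts := by
  obtain ⟨x, hx⟩ := (Set.ne_univ_iff_exists_notMem _).mp hne
  have hxH : ∀ {v}, v ∈ H.verts → x ≠ v := fun hv h => hx (h ▸ hv)
  obtain ⟨h₀, h₁, hh₀, hh₁, hne₀₁⟩ :=
    (Set.one_lt_ncard_iff (Set.finite_of_ncard_pos (by omega))).mp
      (show 1 < H.verts.ncard by omega)
  -- `u₁` is the first vertex of `H` on a walk from `x` avoiding `h₁`, and `u₂` the first one on a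
  -- walk from `x` avoiding `u₁`; the ear runs `u₁ – x – u₂` outside `H`.
  obtain ⟨p₁, hp₁⟩ := h2.exists_walk_not_mem_support (hxH hh₁) hne₀₁
  obtain ⟨c₁, u₁, hc₁, hu₁, hu₁p, q₁, hq₁⟩ := p₁.exists_walk_avoiding_adj_mem_support hx hh₀
  have hu₁h₁ : h₁ ≠ u₁ := fun h => hp₁ (h ▸ hu₁p)
  obtain ⟨p₂, hp₂⟩ := h2.exists_walk_not_mem_support (hxH hu₁) hu₁h₁
  obtain ⟨c₂, u₂, hc₂, hu₂, hu₂p, q₂, hq₂⟩ := p₂.exists_walk_avoiding_adj_mem_support hx hh₁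
  have hu₁u₂ : u₁ ≠ u₂ := fun h => hp₂ (h ▸ hu₂p)
  refine ⟨u₁, u₂, hu₁, hu₂, exists_ear_of_walk_avoiding hu₁ hu₂ hu₁u₂ hc₁.symm hc₂
    (q₁.reverse.append q₂) fun w hw => ?_⟩
  rw [Walk.mem_support_append_iff, Walk.support_reverse, List.mem_reverse] at hw
  exact hw.elim (hq₁ w) (hq₂ w)

/-- If `G` is 2-connected and `H` is a subgraph with at least 2 vertices not
covering all of `G`, then there is an `H`-ear: a path of length at least 2 with
both endpoints in `H`, all internal vertices outside `H` (hence at least one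
internal vertex). -/
theorem stmt12 {V : Type u} [Finite V] (G : SimpleGraph V) (h2 : TwoConnected G)
    (H : G.Subgraph) (hcard : 2 ≤ H.verts.ncard) (hne : H.verts ≠ Set.univ) :
    ∃ (u v : V), u ∈ H.verts ∧ v ∈ H.verts ∧
      ∃ p : G.Walk u v, p.IsPath ∧ 2 ≤ p.length ∧
        ∀ w ∈ p.support, w ≠ u → w ≠ v → w ∉ H.verts :=
  stmt12_general G h2 H hcard hne
end
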